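/- arXiv:1712.08839 — 2 statements merged into one kernel-verified Lean document; each statement's English description precedes it below -/
import Mathlib

section
/- A smooth unit-speed curve α : ℝ → ℝ³ with κ > 0 is a helix (its tangent vector makes a constant angle with some fixed nonzero direction v) if and only if τ/κ is constant. -/
noncomputable section
open scoped RealInnerProductSpace
open Filter Asymptotics

/-- ℝ³ as a Euclidean space. -/
abbrev E3 := EuclideanSpace ℝ (Fin 3)

/-- The point (x,y,z) of ℝ³. -/
def mk3 (x y z : ℝ) : E3 := (WithLp.equiv 2 (Fin 3 → ℝ)).symm ![x, y, z]

/-- Cross product on ℝ³. -/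
def cross3 (u v : E3) : E3 :=
  mk3 (u 1 * v 2 - u 2 * v 1) (u 2 * v 0 - u 0 * v 2) (u 0 * v 1 - u 1 * v 0)

/-- Determinant of three vectors of ℝ³ (scalar triple product). -/
def det3 (u v w : E3) : ℝ :=
  u 0 * (v 1 * w 2 - v 2 * w 1) - u 1 * (v 0 * w 2 - v 2 * w 0) +
    u 2 * (v 0 * w 1 - v 1 * w 0)

lemma inner3 (x y : E3) : ⟪x,y⟫ = x 0 * y 0 + x 1 * y 1 + x 2 * y 2 := by
  simp [PiLp.inner_apply, Fin.sum_univ_three]; ring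

lemma cross3_apply0 (u v : E3) : cross3 u v 0 = u 1 * v 2 - u 2 * v 1 := by
  simp [cross3, mk3]
lemma cross3_apply1 (u v : E3) : cross3 u v 1 = u 2 * v 0 - u 0 * v 2 := by
  simp [cross3, mk3]
lemma cross3_apply2 (u v : E3) : cross3 u v 2 = u 0 * v 1 - u 1 * v 0 := by
  simp [cross3, mk3]

lemma normsq3 (x : E3) (h : ‖x‖ = 1) : x 0 * x 0 + x 1 * x 1 + x 2 * x 2 = 1 := by
  have := real_inner_self_eq_norm_sq x
  rw [inner3, h] at this; linarith

lemma inner_self_cross (u n : E3) : ⟪u, cross3 u n⟫ = 0 := by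
  rw [inner3, cross3_apply0, cross3_apply1, cross3_apply2]; ring

lemma cross_inner_self (u n : E3) (hu : ‖u‖ = 1) (hn : ‖n‖ = 1) (hun : ⟪u,n⟫ = 0) :
    ⟪cross3 u n, cross3 u n⟫ = 1 := by
  have hu' := normsq3 u hu
  have hn' := normsq3 n hn
  rw [inner3] at hun
  rw [inner3, cross3_apply0, cross3_apply1, cross3_apply2]
  linear_combination (n 0 * n 0 + n 1 * n 1 + n 2 * n 2) * hu' + hn' -
    (u 0 * n 0 + u 1 * n 1 + u 2 * n 2) * hun

lemma key_scalar (u0 u1 u2 n0 n1 n2 v0 v1 v2 : ℝ)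
    (hu : u0*u0+u1*u1+u2*u2 = 1) (hn : n0*n0+n1*n1+n2*n2 = 1)
    (hun : u0*n0+u1*n1+u2*n2 = 0)
    (h1 : u0*v0+u1*v1+u2*v2 = 0) (h2 : n0*v0+n1*n1*0+n1*v1+n2*v2 = 0)
    (h3 : (u1*n2-u2*n1)*v0 + (u2*n0-u0*n2)*v1 + (u0*n1-u1*n0)*v2 = 0) :
    v0*v0+v1*v1+v2*v2 = 0 := by
  have h2' : n0*v0+n1*v1+n2*v2 = 0 := by linarith
  have hb : (u1*n2-u2*n1)*(u1*n2-u2*n1) + (u2*n0-u0*n2)*(u2*n0-u0*n2)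
      + (u0*n1-u1*n0)*(u0*n1-u1*n0) = 1 := by
    linear_combination (n0*n0+n1*n1+n2*n2) * hu + hn - (u0*n0+u1*n1+u2*n2) * hun
  have c0 : v1*(u0*n1-u1*n0) - v2*(u2*n0-u0*n2) = 0 := by
    linear_combination u0*h2' - n0*h1
  have c1 : v2*(u1*n2-u2*n1) - v0*(u0*n1-u1*n0) = 0 := by
    linear_combination u1*h2' - n1*h1
  have c2 : v0*(u2*n0-u0*n2) - v1*(u1*n2-u2*n1) = 0 := by
    linear_combination u2*h2' - n2*h1
  linear_combination (-(v0*v0+v1*v1+v2*v2)) * hb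
    + ((u1*n2-u2*n1)*v0 + (u2*n0-u0*n2)*v1 + (u0*n1-u1*n0)*v2) * h3
    + (v1*(u0*n1-u1*n0) - v2*(u2*n0-u0*n2)) * c0
    + (v2*(u1*n2-u2*n1) - v0*(u0*n1-u1*n0)) * c1
    + (v0*(u2*n0-u0*n2) - v1*(u1*n2-u2*n1)) * c2

lemma key_vanish (u n v : E3) (hu : ‖u‖ = 1) (hn : ‖n‖ = 1) (hun : ⟪u,n⟫ = 0)
    (h1 : ⟪u,v⟫ = 0) (h2 : ⟪n,v⟫ = 0) (h3 : ⟪cross3 u n, v⟫ = 0) : v = 0 := by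
  rw [inner3, cross3_apply0, cross3_apply1, cross3_apply2] at h3
  rw [inner3] at h1 h2 hun
  have hvv : ⟪v, v⟫ = 0 := by
    rw [inner3]
    exact key_scalar (u 0) (u 1) (u 2) (n 0) (n 1) (n 2) (v 0) (v 1) (v 2)
      (normsq3 u hu) (normsq3 n hn) hun h1 (by linarith) h3
  exact inner_self_eq_zero.mp hvv

/-- A smooth unit-speed curve α with κ > 0 is a helix (its tangent makes a
constant angle with some fixed unit direction v) iff τ/κ is constant. -/
theorem helix_iff_ratio_constant
    (α T N B : ℝ → E3) (κ τ : ℝ → ℝ)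
    (hα : ContDiff ℝ (⊤ : ℕ∞) α) (hTs : ContDiff ℝ (⊤ : ℕ∞) T) (hNs : ContDiff ℝ (⊤ : ℕ∞) N)
    (hBs : ContDiff ℝ (⊤ : ℕ∞) B) (hκs : ContDiff ℝ (⊤ : ℕ∞) κ) (hτs : ContDiff ℝ (⊤ : ℕ∞) τ)
    (hTdef : ∀ t, T t = deriv α t)
    (hunit : ∀ t, ‖T t‖ = 1) (hNunit : ∀ t, ‖N t‖ = 1)
    (hBdef : ∀ t, B t = cross3 (T t) (N t))
    (hTN : ∀ t, ⟪T t, N t⟫ = 0)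
    (hκ : ∀ t, κ t = ‖iteratedDeriv 2 α t‖)
    (hκpos : ∀ t, 0 < κ t)
    (hFr1 : ∀ t, deriv T t = κ t • N t)
    (hFr2 : ∀ t, deriv N t = (-(κ t)) • T t + τ t • B t)
    (hFr3 : ∀ t, deriv B t = (-(τ t)) • N t) :
    (∃ v : E3, ‖v‖ = 1 ∧ ∃ a : ℝ, ∀ t, ⟪deriv α t, v⟫ = a) ↔
      ∃ a : ℝ, ∀ t, τ t / κ t = a := by
  have hTd : Differentiable ℝ T := hTs.differentiable (by simp)
  have hNd : Differentiable ℝ N := hNs.differentiable (by simp)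
  have hBd : Differentiable ℝ B := hBs.differentiable (by simp)
  have hTB : ∀ t, ⟪T t, B t⟫ = 0 := fun t => by
    rw [hBdef t]; exact inner_self_cross _ _
  have hBB : ∀ t, ⟪B t, B t⟫ = 1 := fun t => by
    rw [hBdef t]; exact cross_inner_self _ _ (hunit t) (hNunit t) (hTN t)
  constructor
  · rintro ⟨v, hv1, a, ha⟩
    have ha' : ∀ t, ⟪T t, v⟫ = a := fun t => by rw [hTdef]; exact ha t
    -- derivative computations
    have hdT : ∀ t, HasDerivAt (fun s => ⟪T s, v⟫) (⟪T t, (0:E3)⟫ + ⟪deriv T t, v⟫) t :=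
      fun t => (hTd t).hasDerivAt.inner ℝ (hasDerivAt_const t v)
    have hNv : ∀ t, ⟪N t, v⟫ = 0 := by
      intro t
      have heq : (fun s => ⟪T s, v⟫) = fun _ => a := funext ha'
      have h0 : HasDerivAt (fun s => ⟪T s, v⟫) 0 t := by
        rw [heq]; exact hasDerivAt_const t a
      have := (hdT t).unique h0
      rw [inner_zero_right, hFr1 t, real_inner_smul_left] at this
      have hk := (hκpos t).ne'
      have : κ t * ⟪N t, v⟫ = 0 := by linarith
      rcases mul_eq_zero.mp this with h | h
      · exact absurd h hk
      · exact h
    have hBdiff : Differentiable ℝ fun s => ⟪B s, v⟫ :=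
      Differentiable.inner ℝ hBd (differentiable_const v)
    have hBv : ∀ t, ⟪B t, v⟫ = ⟪B 0, v⟫ := by
      intro t
      refine is_const_of_deriv_eq_zero hBdiff ?_ t 0
      intro s
      have hd := ((hBd s).hasDerivAt.inner ℝ (hasDerivAt_const s v)).deriv
      rw [hd, inner_zero_right, hFr3 s, real_inner_smul_left, hNv s]
      ring
    set b := ⟪B 0, v⟫ with hbdef
    have hrel : ∀ t, τ t * b = κ t * a := by
      intro t
      have heq : (fun s => ⟪N s, v⟫) = fun _ => (0:ℝ) := funext hNv
      have h0 : HasDerivAt (fun s => ⟪N s, v⟫) 0 t := by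
        rw [heq]; exact hasDerivAt_const t 0
      have := (((hNd t).hasDerivAt.inner ℝ (hasDerivAt_const t v))).unique h0
      rw [inner_zero_right, hFr2 t, inner_add_left, real_inner_smul_left,
        real_inner_smul_left, ha' t, hBv t] at this
      linarith
    by_cases hb : b = 0
    · exfalso
      have ha0 : a = 0 := by
        have := hrel 0
        rw [hb, mul_zero] at this
        exact (mul_eq_zero.mp this.symm).resolve_left (hκpos 0).ne'
      have hv0 : v = 0 := by
        refine key_vanish (T 0) (N 0) v (hunit 0) (hNunit 0) (hTN 0) ?_ ?_ ?_
        · rw [ha' 0, ha0]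
        · exact hNv 0
        · rw [← hBdef 0]; exact hb
      rw [hv0, norm_zero] at hv1
      exact one_ne_zero hv1.symm
    · refine ⟨a / b, fun t => ?_⟩
      rw [div_eq_div_iff (hκpos t).ne' hb]
      linarith [hrel t]
  · rintro ⟨c, hc⟩
    have hτ : ∀ t, τ t = c * κ t := fun t => by
      have := (div_eq_iff (hκpos t).ne').mp (hc t)
      linarith
    set f := fun t => c • T t + B t with hfdef
    have hfd : Differentiable ℝ f := (hTd.const_smul c).add hBd
    have hf' : ∀ t, deriv f t = 0 := by
      intro t
      have hd : HasDerivAt f (c • deriv T t + deriv B t) t :=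
        ((hTd t).hasDerivAt.const_smul c).add (hBd t).hasDerivAt
      rw [hd.deriv, hFr1 t, hFr3 t, hτ t, smul_smul, ← add_smul]
      norm_num
    have hconst : ∀ t, f t = f 0 := fun t => is_const_of_deriv_eq_zero hfd hf' t 0
    have hTw : ∀ t, ⟪T t, f 0⟫ = c := by
      intro t
      rw [← hconst t, hfdef]
      simp only [inner_add_right, real_inner_smul_right]
      rw [hTB t, real_inner_self_eq_norm_sq, hunit t]
      ring
    have hw2 : ⟪f 0, f 0⟫ = c ^ 2 + 1 := by
      rw [hfdef]
      simp only [inner_add_right, inner_add_left, real_inner_smul_right,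
        real_inner_smul_left]
      have h3 : ⟪T 0, T 0⟫ = 1 := by
        rw [real_inner_self_eq_norm_sq, hunit 0]; norm_num
      have h4 : ⟪B 0, T 0⟫ = 0 := by rw [real_inner_comm]; exact hTB 0
      rw [h3, h4, hBB 0, hTB 0]
      ring
    have hs : (0:ℝ) < Real.sqrt (c ^ 2 + 1) := by
      apply Real.sqrt_pos.mpr; positivity
    have hwnorm : ‖f 0‖ = Real.sqrt (c ^ 2 + 1) := by
      rw [← Real.sqrt_sq (norm_nonneg (f 0)), ← real_inner_self_eq_norm_sq, hw2]
    refine ⟨(Real.sqrt (c ^ 2 + 1))⁻¹ • f 0, ?_, (Real.sqrt (c ^ 2 + 1))⁻¹ * c, ?_⟩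
    · rw [norm_smul, hwnorm, norm_inv, Real.norm_eq_abs,
        abs_of_pos hs, inv_mul_cancel₀ hs.ne']
    · intro t
      rw [← hTdef t, real_inner_smul_right, hTw t]
end
end

section
/- Let γ_s(t) = (a₂t² + a₃t³, s₁t + b₃t³ + b₄t⁴, s₂t + c₃t³ + c₄t⁴) with a₂ ≠ 0, b₃ ≠ 0. For s ≠ 0 small, γ_s is a regular curve at t = 0 (γ_s'(0) = (0, s₁, s₂) ≠ 0), and the numerator of τ_s'κ_s − κ_s'τ_s at t = 0, as a function of (s₁, s₂), has leading term proportional to (4a₂b₄ − 9a₃b₃)s₂ + (9a₃c₃ − 4a₂c₄)s₁; in particular the twisting stratum T in the (s₁,s₂)-plane is, to first order, the line (4a₂b₄ − 9a₃b₃)s₂ + (9a₃c₃ − 4a₂c₄)s₁ = 0. -/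
noncomputable section
open scoped RealInnerProductSpace
open Filter Asymptotics

/-- Curvature of a space curve via the standard (non arc-length) formula. -/
def curvatureF (γ : ℝ → E3) (t : ℝ) : ℝ :=
  ‖cross3 (deriv γ t) (iteratedDeriv 2 γ t)‖ / ‖deriv γ t‖ ^ 3

/-- Torsion of a space curve via the standard (non arc-length) formula. -/
def torsionF (γ : ℝ → E3) (t : ℝ) : ℝ :=
  ⟪cross3 (deriv γ t) (iteratedDeriv 2 γ t), iteratedDeriv 3 γ t⟫ /
    ‖cross3 (deriv γ t) (iteratedDeriv 2 γ t)‖ ^ 2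

/-- The 2-parameter deformation γ_s of the space cusp. -/
def cuspFam (a₂ a₃ b₃ b₄ c₃ c₄ : ℝ) (s : ℝ × ℝ) : ℝ → E3 := fun t =>
  mk3 (a₂ * t ^ 2 + a₃ * t ^ 3) (s.1 * t + b₃ * t ^ 3 + b₄ * t ^ 4)
    (s.2 * t + c₃ * t ^ 3 + c₄ * t ^ 4)

/-- The twisting quantity (κτ' − κ'τ)(0) of the curve γ_s, as a function of s. -/
def twistQ (a₂ a₃ b₃ b₄ c₃ c₄ : ℝ) (s : ℝ × ℝ) : ℝ :=
  curvatureF (cuspFam a₂ a₃ b₃ b₄ c₃ c₄ s) 0 *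
      deriv (torsionF (cuspFam a₂ a₃ b₃ b₄ c₃ c₄ s)) 0 -
    deriv (curvatureF (cuspFam a₂ a₃ b₃ b₄ c₃ c₄ s)) 0 *
      torsionF (cuspFam a₂ a₃ b₃ b₄ c₃ c₄ s) 0

/-! With `X = γ' × γ''`, `A = ‖X‖²`, `B = ‖γ'‖²` and `P = ⟪X, γ'''⟫` one has `κ = √A / √B³` and
`τ = P / A`, hence `κτ' − κ'τ = √A / (√B³ A²) · (P'A − 3/2 PA' + 3/2 PAB'/B)`, where
`A' = 2⟪X, γ' × γ'''⟫`, `B' = 2⟪γ', γ''⟫` and `P' = ⟪X, γ''''⟫`: the twisting quantity at `t`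
depends only on the 4-jet of `γ` at `t`. The 4-jet of `γ_s` at `0` is `(0, s₁, s₂)`, `(2a₂, 0, 0)`,
`6 (a₃, b₃, c₃)`, `24 (0, b₄, c₄)`, and substituting it gives the exact identity
`(s₁² + s₂²)² (κτ' − κ'τ)(0) = 6/|a₂| · ((4a₂b₄ − 9a₃b₃)s₂ + (9a₃c₃ − 4a₂c₄)s₁)` for `s ≠ 0`,
so the remainder vanishes identically. -/

@[simp] lemma mk3_apply_zero (x y z : ℝ) : mk3 x y z 0 = x := rfl
@[simp] lemma mk3_apply_one (x y z : ℝ) : mk3 x y z 1 = y := rfl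
@[simp] lemma mk3_apply_two (x y z : ℝ) : mk3 x y z 2 = z := rfl

lemma mk3_eq_self (v : E3) : mk3 (v 0) (v 1) (v 2) = v := by
  ext i; fin_cases i <;> rfl

lemma smul_mk3 (r x y z : ℝ) : r • mk3 x y z = mk3 (r * x) (r * y) (r * z) := by
  ext i; fin_cases i <;> rfl

lemma cross3_mk3 (x y z x' y' z' : ℝ) :
    cross3 (mk3 x y z) (mk3 x' y' z') =
      mk3 (y * z' - z * y') (z * x' - x * z') (x * y' - y * x') :=
  rfl

lemma inner_mk3 (x y z x' y' z' : ℝ) :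
    ⟪mk3 x y z, mk3 x' y' z'⟫ = x * x' + y * y' + z * z' := by
  simp only [mk3, WithLp.equiv_symm_apply, PiLp.inner_apply, RCLike.inner_apply,
    Real.ringHom_apply, Fin.sum_univ_three, Matrix.cons_val_zero, Matrix.cons_val_one,
    Matrix.cons_val]
  ring

lemma norm_mk3 (x y z : ℝ) : ‖mk3 x y z‖ = √(x ^ 2 + y ^ 2 + z ^ 2) := by
  simp [mk3, EuclideanSpace.norm_eq, Fin.sum_univ_three]

lemma mk3_eq_zero_iff {x y z : ℝ} : mk3 x y z = 0 ↔ x = 0 ∧ y = 0 ∧ z = 0 := by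
  refine ⟨fun h => ⟨congrArg (· 0) h, congrArg (· 1) h, congrArg (· 2) h⟩, ?_⟩
  rintro ⟨rfl, rfl, rfl⟩
  ext i; fin_cases i <;> rfl

lemma mk3_zero_ne_zero {s : ℝ × ℝ} (hs : s ≠ 0) : mk3 0 s.1 s.2 ≠ 0 := by
  rw [Ne, mk3_eq_zero_iff]
  exact fun h => hs (Prod.ext h.2.1 h.2.2)

lemma cross3_self (v : E3) : cross3 v v = 0 := by
  rw [cross3, mk3_eq_zero_iff]; refine ⟨?_, ?_, ?_⟩ <;> ring

lemma cross3_zero_left (v : E3) : cross3 0 v = 0 := by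
  rw [cross3, mk3_eq_zero_iff]; simp

lemma inner_cross3_right (u v : E3) : ⟪cross3 u v, v⟫ = 0 := by
  rw [← mk3_eq_self u, ← mk3_eq_self v, cross3_mk3, inner_mk3]; ring

lemma norm_cross3_mk3_axis (a x y : ℝ) :
    ‖cross3 (mk3 0 x y) (mk3 a 0 0)‖ = |a| * ‖mk3 0 x y‖ := by
  rw [cross3_mk3, norm_mk3, norm_mk3, ← Real.sqrt_sq (abs_nonneg a),
    ← Real.sqrt_mul (sq_nonneg _), sq_abs]
  ring_nf

lemma HasDerivAt.euclideanSpace_apply {ι : Type*} [Fintype ι] {u : ℝ → EuclideanSpace ℝ ι}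
    {u' : EuclideanSpace ℝ ι} {t : ℝ} (hu : HasDerivAt u u' t) (i : ι) :
    HasDerivAt (fun s => u s i) (u' i) t :=
  (EuclideanSpace.proj i : EuclideanSpace ℝ ι →L[ℝ] ℝ).hasFDerivAt.comp_hasDerivAt t hu

lemma HasDerivAt.mk3 {f g h : ℝ → ℝ} {f' g' h' t : ℝ}
    (hf : HasDerivAt f f' t) (hg : HasDerivAt g g' t) (hh : HasDerivAt h h' t) :
    HasDerivAt (fun u => mk3 (f u) (g u) (h u)) (mk3 f' g' h') t := by
  have basis (x y z : ℝ) :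
      _root_.mk3 x y z = x • _root_.mk3 1 0 0 + y • _root_.mk3 0 1 0 + z • _root_.mk3 0 0 1 := by
    ext i; fin_cases i <;> simp [_root_.mk3]
  have h := ((hf.smul_const (_root_.mk3 1 0 0)).add (hg.smul_const (_root_.mk3 0 1 0))).add
    (hh.smul_const (_root_.mk3 0 0 1))
  exact (h.congr_deriv (basis _ _ _).symm).congr_of_eventuallyEq
    (Eventually.of_forall fun u => basis _ _ _)

lemma HasDerivAt.cross3 {u v : ℝ → E3} {u' v' : E3} {t : ℝ}
    (hu : HasDerivAt u u' t) (hv : HasDerivAt v v' t) :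
    HasDerivAt (fun s => cross3 (u s) (v s)) (cross3 u' (v t) + cross3 (u t) v') t := by
  have h := HasDerivAt.mk3
    (((hu.euclideanSpace_apply 1).mul (hv.euclideanSpace_apply 2)).sub
      ((hu.euclideanSpace_apply 2).mul (hv.euclideanSpace_apply 1)))
    (((hu.euclideanSpace_apply 2).mul (hv.euclideanSpace_apply 0)).sub
      ((hu.euclideanSpace_apply 0).mul (hv.euclideanSpace_apply 2)))
    (((hu.euclideanSpace_apply 0).mul (hv.euclideanSpace_apply 1)).sub
      ((hu.euclideanSpace_apply 1).mul (hv.euclideanSpace_apply 0)))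
  refine h.congr_deriv (PiLp.ext fun i => ?_)
  fin_cases i <;> simp [_root_.cross3] <;> ring

lemma ContDiff.hasDerivAt_iteratedDeriv {E : Type*} [NormedAddCommGroup E] [NormedSpace ℝ E]
    {f : ℝ → E} {n k : ℕ} (hf : ContDiff ℝ n f) (hk : k < n) (t : ℝ) :
    HasDerivAt (iteratedDeriv k f) (iteratedDeriv (k + 1) f t) t := by
  rw [iteratedDeriv_succ]
  exact (hf.differentiable_iteratedDeriv k (by exact_mod_cast hk) t).hasDerivAt

lemma twist_formula_of_hasDerivAt {A B P : ℝ → ℝ} {A' B' P' t : ℝ} (hA : HasDerivAt A A' t)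
    (hB : HasDerivAt B B' t) (hP : HasDerivAt P P' t) (hA₀ : 0 < A t) (hB₀ : 0 < B t) :
    √(A t) / √(B t) ^ 3 * deriv (fun u => P u / A u) t -
        deriv (fun u => √(A u) / √(B u) ^ 3) t * (P t / A t) =
      √(A t) / √(B t) ^ 3 / A t ^ 2 *
        (P' * A t - 3 / 2 * P t * A' + 3 / 2 * P t * A t * B' / B t) := by
  have hτ : HasDerivAt (fun u => P u / A u) _ t := hP.div hA hA₀.ne'
  have hκ : HasDerivAt (fun u => √(A u) / √(B u) ^ 3) _ t :=
    (hA.sqrt hA₀.ne').div ((hB.sqrt hB₀.ne').pow 3) (by positivity)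
  rw [hτ.deriv, hκ.deriv]
  obtain ⟨a, ha, hAa⟩ : ∃ a, 0 < a ∧ A t = a ^ 2 :=
    ⟨_, Real.sqrt_pos.2 hA₀, (Real.sq_sqrt hA₀.le).symm⟩
  obtain ⟨b, hb, hBb⟩ : ∃ b, 0 < b ∧ B t = b ^ 2 :=
    ⟨_, Real.sqrt_pos.2 hB₀, (Real.sq_sqrt hB₀.le).symm⟩
  rw [hAa, hBb, Real.sqrt_sq ha.le, Real.sqrt_sq hb.le]
  field_simp
  ring

def twist (γ : ℝ → E3) (t : ℝ) : ℝ :=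
  curvatureF γ t * deriv (torsionF γ) t - deriv (curvatureF γ) t * torsionF γ t

theorem twist_eq_of_jets {γ : ℝ → E3} (hγ : ContDiff ℝ 4 γ) {t : ℝ} {v₁ v₂ v₃ v₄ : E3}
    (h₁ : deriv γ t = v₁) (h₂ : iteratedDeriv 2 γ t = v₂) (h₃ : iteratedDeriv 3 γ t = v₃)
    (h₄ : iteratedDeriv 4 γ t = v₄) (hX : cross3 v₁ v₂ ≠ 0) :
    twist γ t =
      ‖cross3 v₁ v₂‖ / ‖v₁‖ ^ 3 / ‖cross3 v₁ v₂‖ ^ 4 *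
        (⟪cross3 v₁ v₂, v₄⟫ * ‖cross3 v₁ v₂‖ ^ 2 -
          3 * ⟪cross3 v₁ v₂, v₃⟫ * ⟪cross3 v₁ v₂, cross3 v₁ v₃⟫ +
          3 * ⟪cross3 v₁ v₂, v₃⟫ * ‖cross3 v₁ v₂‖ ^ 2 * ⟪v₁, v₂⟫ / ‖v₁‖ ^ 2) := by
  have d₁ : HasDerivAt (deriv γ) v₂ t := by
    simpa only [iteratedDeriv_one, h₂] using hγ.hasDerivAt_iteratedDeriv (k := 1) (by norm_num) t
  have d₂ : HasDerivAt (iteratedDeriv 2 γ) v₃ t := h₃ ▸ hγ.hasDerivAt_iteratedDeriv (by norm_num) t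
  have d₃ : HasDerivAt (iteratedDeriv 3 γ) v₄ t := h₄ ▸ hγ.hasDerivAt_iteratedDeriv (by norm_num) t
  have dX : HasDerivAt (fun u => cross3 (deriv γ u) (iteratedDeriv 2 γ u)) (cross3 v₁ v₃) t :=
    (d₁.cross3 d₂).congr_deriv (by rw [h₁, h₂, cross3_self, zero_add])
  have dP := dX.inner ℝ d₃
  rw [h₁, h₂, h₃, inner_cross3_right, add_zero] at dP
  have hv₁ : v₁ ≠ 0 := by
    rintro rfl
    exact hX (cross3_zero_left v₂)
  have hκ : curvatureF γ = fun u =>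
      √(‖cross3 (deriv γ u) (iteratedDeriv 2 γ u)‖ ^ 2) / √(‖deriv γ u‖ ^ 2) ^ 3 := by
    funext u
    simp only [curvatureF, Real.sqrt_sq (norm_nonneg _)]
  have hτ : torsionF γ = fun u =>
      ⟪cross3 (deriv γ u) (iteratedDeriv 2 γ u), iteratedDeriv 3 γ u⟫ /
        ‖cross3 (deriv γ u) (iteratedDeriv 2 γ u)‖ ^ 2 := rfl
  rw [twist, hκ, hτ, twist_formula_of_hasDerivAt dX.norm_sq d₁.norm_sq dP
    (by rw [h₁, h₂]; positivity) (by rw [h₁]; positivity)]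
  simp only [h₁, h₂, h₃, Real.sqrt_sq (norm_nonneg _)]
  field_simp

section Quartic
variable {E : Type*} [NormedAddCommGroup E] [NormedSpace ℝ E]

def quartic (c₀ c₁ c₂ c₃ c₄ : E) (t : ℝ) : E :=
  c₀ + t • c₁ + t ^ 2 • c₂ + t ^ 3 • c₃ + t ^ 4 • c₄

lemma quartic_zero (c₀ c₁ c₂ c₃ c₄ : E) : quartic c₀ c₁ c₂ c₃ c₄ 0 = c₀ := by
  simp [quartic]

lemma hasDerivAt_quartic (c₀ c₁ c₂ c₃ c₄ : E) (t : ℝ) :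
    HasDerivAt (quartic c₀ c₁ c₂ c₃ c₄)
      (quartic c₁ ((2 : ℝ) • c₂) ((3 : ℝ) • c₃) ((4 : ℝ) • c₄) 0 t) t := by
  have h := (((((hasDerivAt_id t).smul_const c₁).const_add c₀).add
    ((hasDerivAt_pow 2 t).smul_const c₂)).add ((hasDerivAt_pow 3 t).smul_const c₃)).add
    ((hasDerivAt_pow 4 t).smul_const c₄)
  refine h.congr_deriv ?_
  simp only [quartic, smul_smul, smul_zero, add_zero, one_smul]
  norm_num [mul_comm]

lemma deriv_quartic (c₀ c₁ c₂ c₃ c₄ : E) :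
    deriv (quartic c₀ c₁ c₂ c₃ c₄) =
      quartic c₁ ((2 : ℝ) • c₂) ((3 : ℝ) • c₃) ((4 : ℝ) • c₄) 0 :=
  funext fun t => (hasDerivAt_quartic c₀ c₁ c₂ c₃ c₄ t).deriv

lemma contDiff_quartic (c₀ c₁ c₂ c₃ c₄ : E) {n : WithTop ℕ∞} :
    ContDiff ℝ n (quartic c₀ c₁ c₂ c₃ c₄) := by
  unfold quartic; fun_prop

lemma quartic_jets_zero (c₀ c₁ c₂ c₃ c₄ : E) :
    deriv (quartic c₀ c₁ c₂ c₃ c₄) 0 = c₁ ∧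
    iteratedDeriv 2 (quartic c₀ c₁ c₂ c₃ c₄) 0 = (2 : ℝ) • c₂ ∧
    iteratedDeriv 3 (quartic c₀ c₁ c₂ c₃ c₄) 0 = (6 : ℝ) • c₃ ∧
    iteratedDeriv 4 (quartic c₀ c₁ c₂ c₃ c₄) 0 = (24 : ℝ) • c₄ := by
  simp only [iteratedDeriv_succ, iteratedDeriv_zero, deriv_quartic, quartic_zero, smul_smul,
    smul_zero]
  norm_num

end Quartic

section CuspFamily
variable (a₂ a₃ b₃ b₄ c₃ c₄ : ℝ) (s : ℝ × ℝ)

lemma cuspFam_eq_quartic :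
    cuspFam a₂ a₃ b₃ b₄ c₃ c₄ s =
      quartic 0 (mk3 0 s.1 s.2) (mk3 a₂ 0 0) (mk3 a₃ b₃ c₃) (mk3 0 b₄ c₄) := by
  funext t
  refine PiLp.ext fun i => ?_
  fin_cases i <;> simp [cuspFam, quartic] <;> ring

lemma cuspFam_jets_zero :
    deriv (cuspFam a₂ a₃ b₃ b₄ c₃ c₄ s) 0 = mk3 0 s.1 s.2 ∧
    iteratedDeriv 2 (cuspFam a₂ a₃ b₃ b₄ c₃ c₄ s) 0 = mk3 (2 * a₂) 0 0 ∧
    iteratedDeriv 3 (cuspFam a₂ a₃ b₃ b₄ c₃ c₄ s) 0 = mk3 (6 * a₃) (6 * b₃) (6 * c₃) ∧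
    iteratedDeriv 4 (cuspFam a₂ a₃ b₃ b₄ c₃ c₄ s) 0 = mk3 0 (24 * b₄) (24 * c₄) := by
  simpa only [smul_mk3, mul_zero, ← cuspFam_eq_quartic] using quartic_jets_zero (0 : E3)
    (mk3 0 s.1 s.2) (mk3 a₂ 0 0) (mk3 a₃ b₃ c₃) (mk3 0 b₄ c₄)

lemma contDiff_cuspFam {n : WithTop ℕ∞} : ContDiff ℝ n (cuspFam a₂ a₃ b₃ b₄ c₃ c₄ s) := by
  rw [cuspFam_eq_quartic]
  exact contDiff_quartic _ _ _ _ _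

end CuspFamily

theorem twistQ_numerator_eq {a₂ : ℝ} (a₃ b₃ b₄ c₃ c₄ : ℝ) (ha₂ : a₂ ≠ 0) {s : ℝ × ℝ}
    (hs : s ≠ 0) :
    (s.1 ^ 2 + s.2 ^ 2) ^ 2 * twistQ a₂ a₃ b₃ b₄ c₃ c₄ s =
      6 / |a₂| * ((4 * a₂ * b₄ - 9 * a₃ * b₃) * s.2 + (9 * a₃ * c₃ - 4 * a₂ * c₄) * s.1) := by
  obtain ⟨h₁, h₂, h₃, h₄⟩ := cuspFam_jets_zero a₂ a₃ b₃ b₄ c₃ c₄ s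
  have hv := norm_pos_iff.2 (mk3_zero_ne_zero hs)
  have hX : cross3 (mk3 0 s.1 s.2) (mk3 (2 * a₂) 0 0) ≠ 0 := by
    rw [← norm_ne_zero_iff, norm_cross3_mk3_axis]
    positivity
  have hr : ‖mk3 0 s.1 s.2‖ ^ 2 = s.1 ^ 2 + s.2 ^ 2 := by
    rw [norm_mk3, Real.sq_sqrt (by positivity)]
    ring
  change (s.1 ^ 2 + s.2 ^ 2) ^ 2 * twist (cuspFam a₂ a₃ b₃ b₄ c₃ c₄ s) 0 = _
  rw [twist_eq_of_jets (contDiff_cuspFam ..) h₁ h₂ h₃ h₄ hX, norm_cross3_mk3_axis, ← hr]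
  simp only [cross3_mk3, inner_mk3]
  rw [abs_mul, abs_two]
  field_simp
  rw [hr]
  rcases abs_cases a₂ with ⟨h, _⟩ | ⟨h, _⟩ <;> rw [h] <;> ring

theorem twisting_stratum_of_cusp_family_general
    (a₂ a₃ b₃ b₄ c₃ c₄ : ℝ) (ha₂ : a₂ ≠ 0) :
    (∀ s : ℝ × ℝ, s ≠ 0 →
      deriv (cuspFam a₂ a₃ b₃ b₄ c₃ c₄ s) 0 = mk3 0 s.1 s.2 ∧ mk3 0 s.1 s.2 ≠ 0) ∧
    ∃ C : ℝ, C ≠ 0 ∧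
      (fun s : ℝ × ℝ =>
          (s.1 ^ 2 + s.2 ^ 2) ^ 2 * twistQ a₂ a₃ b₃ b₄ c₃ c₄ s -
            C * ((4 * a₂ * b₄ - 9 * a₃ * b₃) * s.2 + (9 * a₃ * c₃ - 4 * a₂ * c₄) * s.1))
        =o[nhds 0] (fun s : ℝ × ℝ => ‖s‖) := by
  refine ⟨fun s hs => ⟨(cuspFam_jets_zero a₂ a₃ b₃ b₄ c₃ c₄ s).1, mk3_zero_ne_zero hs⟩,
    6 / |a₂|, by positivity, (isLittleO_zero _ _).congr_left fun s => ?_⟩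
  rcases eq_or_ne s 0 with rfl | hs
  · simp
  · rw [twistQ_numerator_eq a₃ b₃ b₄ c₃ c₄ ha₂ hs, sub_self]

/-- For s ≠ 0 the curve γ_s is regular at t = 0, and the numerator
(s₁² + s₂²)²·(κτ' − κ'τ)(0) has, as a function of s, leading term proportional to
(4a₂b₄ − 9a₃b₃)s₂ + (9a₃c₃ − 4a₂c₄)s₁: the twisting stratum is to first order this line. -/
theorem twisting_stratum_of_cusp_family
    (a₂ a₃ b₃ b₄ c₃ c₄ : ℝ) (ha₂ : a₂ ≠ 0) (hb₃ : b₃ ≠ 0) :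
    (∀ s : ℝ × ℝ, s ≠ 0 →
      deriv (cuspFam a₂ a₃ b₃ b₄ c₃ c₄ s) 0 = mk3 0 s.1 s.2 ∧ mk3 0 s.1 s.2 ≠ 0) ∧
    ∃ C : ℝ, C ≠ 0 ∧
      (fun s : ℝ × ℝ =>
          (s.1 ^ 2 + s.2 ^ 2) ^ 2 * twistQ a₂ a₃ b₃ b₄ c₃ c₄ s -
            C * ((4 * a₂ * b₄ - 9 * a₃ * b₃) * s.2 + (9 * a₃ * c₃ - 4 * a₂ * c₄) * s.1))
        =o[nhds 0] (fun s : ℝ × ℝ => ‖s‖) :=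
  twisting_stratum_of_cusp_family_general a₂ a₃ b₃ b₄ c₃ c₄ ha₂
end
end
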